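/- (Theorem 2, case α = 1.) Let S and A be nonempty finite sets, r : S×A → ℝ, γ ∈ (0,1), P a transition kernel and τ > 0. Let q_* be the unique fixed point of the Bellman optimality operator L, and assume that for every s ∈ S the maximizer a_*(s) of a ↦ q_*(s,a) is unique. Let (π_k, q_k)_{k≥0} be the error-free M-VI(1,τ) sequence (all ε_k = 0) started from a full-support policy π₀ and any q₀. Then for every s ∈ S: q_k(s, a_*(s)) → q_*(s, a_*(s)) as k → ∞, and for every a ≠ a_*(s), q_k(s,a) → −∞ (i.e., tends to the filter atBot) as k → ∞. -/

import Mathlib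

/-!
With `α = 1` the Munchausen bonus `τ ln π_{k+1} = q_k - v_k`, where `v_k` is the log-sum-exp
soft value of `q_k`, so the update reads `q_{k+1} = q_k + r + γ P v_k - v_k`. Telescoping against
the optimal value `v_*` gives `q_k = q_0 + k (q_* - v_*) + γ P E_k - E_k` with
`E_k = ∑_{j<k} (v_j - v_*)`. Since a soft value lies within `τ ln |A|` of the maximum and
`q_* ≤ v_*`, the sums `E_k` obey `‖E_{k+1}‖ ≤ C + γ ‖E_k‖` and stay bounded. Hence
`q_k(s,a) - q_k(s,a_*)` decreases linearly for `a ≠ a_*`, the softmax concentrates on `a_*`,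
`v_k - q_k(·,a_*) → 0`, and `q_k(·,a_*)` follows a γ-contraction towards `v_*` up to a
vanishing perturbation.
-/

open Filter Topology Finset Matrix

section LogSumExp

open Real

variable {A : Type*} [Fintype A] {τ : ℝ}

noncomputable def logSumExp (τ : ℝ) (f : A → ℝ) : ℝ := τ * log (∑ a, exp (f a / τ))

noncomputable def softmax (τ : ℝ) (f : A → ℝ) (a : A) : ℝ :=
  exp (f a / τ) / ∑ a', exp (f a' / τ)

lemma sum_exp_div_pos [Nonempty A] (τ : ℝ) (f : A → ℝ) : 0 < ∑ a, exp (f a / τ) :=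
  sum_pos (fun _ _ => exp_pos _) univ_nonempty

lemma sum_softmax [Nonempty A] (τ : ℝ) (f : A → ℝ) : ∑ a, softmax τ f a = 1 := by
  simp only [softmax, ← sum_div, div_self (sum_exp_div_pos τ f).ne']

lemma mul_log_softmax [Nonempty A] (hτ : τ ≠ 0) (f : A → ℝ) (a : A) :
    τ * log (softmax τ f a) = f a - logSumExp τ f := by
  rw [softmax, log_div (exp_ne_zero _) (sum_exp_div_pos τ f).ne', log_exp, mul_sub,
    mul_div_cancel₀ _ hτ, logSumExp]

lemma sum_softmax_mul_sub_mul_log [Nonempty A] (hτ : τ ≠ 0) (f : A → ℝ) :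
    ∑ a, softmax τ f a * (f a - τ * log (softmax τ f a)) = logSumExp τ f := by
  simp only [mul_log_softmax hτ, sub_sub_cancel, ← sum_mul, sum_softmax, one_mul]

lemma logSumExp_add_const [Nonempty A] (hτ : τ ≠ 0) (f : A → ℝ) (c : ℝ) :
    logSumExp τ (fun a => f a + c) = logSumExp τ f + c := by
  have hsum : ∑ a, exp ((f a + c) / τ) = (∑ a, exp (f a / τ)) * exp (c / τ) := by
    simp only [add_div, exp_add, sum_mul]
  rw [logSumExp, logSumExp, hsum, log_mul (sum_exp_div_pos τ f).ne' (exp_ne_zero _), log_exp,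
    mul_add, mul_div_cancel₀ _ hτ]

lemma le_logSumExp (hτ : 0 < τ) (f : A → ℝ) (a : A) : f a ≤ logSumExp τ f := by
  have hle : exp (f a / τ) ≤ ∑ a', exp (f a' / τ) :=
    single_le_sum (fun a' _ => (exp_pos (f a' / τ)).le) (mem_univ a)
  calc f a = τ * log (exp (f a / τ)) := by rw [log_exp, mul_div_cancel₀ _ hτ.ne']
    _ ≤ logSumExp τ f := by unfold logSumExp; gcongr

lemma logSumExp_le_of_forall_le [Nonempty A] (hτ : 0 < τ) {f : A → ℝ} {M : ℝ}
    (hf : ∀ a, f a ≤ M) : logSumExp τ f ≤ M + τ * log (Fintype.card A) := by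
  have hle : ∑ a, exp (f a / τ) ≤ Fintype.card A * exp (M / τ) := by
    calc ∑ a, exp (f a / τ) ≤ ∑ _a : A, exp (M / τ) := by gcongr with a; exact hf a
      _ = Fintype.card A * exp (M / τ) := by simp
  calc logSumExp τ f ≤ τ * log (Fintype.card A * exp (M / τ)) := by
        unfold logSumExp; gcongr
    _ = M + τ * log (Fintype.card A) := by
        rw [log_mul (by simp) (exp_ne_zero _), log_exp, mul_add, mul_div_cancel₀ _ hτ.ne',
          add_comm]

lemma logSumExp_sub_le [Nonempty A] [DecidableEq A] (hτ : 0 < τ) (f : A → ℝ) (a₀ : A) :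
    logSumExp τ f - f a₀ ≤ τ * ∑ a ∈ univ.erase a₀, exp ((f a - f a₀) / τ) := by
  have hshift : logSumExp τ f - f a₀ = logSumExp τ (fun a => f a + -f a₀) := by
    rw [logSumExp_add_const hτ.ne', sub_eq_add_neg]
  set t := ∑ a ∈ univ.erase a₀, exp ((f a - f a₀) / τ)
  have hsum : ∑ a, exp ((f a + -f a₀) / τ) = 1 + t := by
    rw [← add_sum_erase _ _ (mem_univ a₀)]
    simp [t, sub_eq_add_neg]
  have ht : 0 ≤ t := sum_nonneg fun a _ => (exp_pos _).le
  rw [hshift, logSumExp, hsum]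
  gcongr
  linarith [log_le_sub_one_of_pos (by linarith : (0 : ℝ) < 1 + t)]

end LogSumExp

lemma tendsto_zero_of_le_mul_add {γ : ℝ} {x ε : ℕ → ℝ} (hγ0 : 0 ≤ γ) (hγ1 : γ < 1)
    (hx : ∀ k, 0 ≤ x k) (hrec : ∀ k, x (k + 1) ≤ γ * x k + ε k)
    (hε : Tendsto ε atTop (𝓝 0)) : Tendsto x atTop (𝓝 0) := by
  refine tendsto_order.2 ⟨fun b hb => Eventually.of_forall fun k => hb.trans_le (hx k),
    fun η hη => ?_⟩
  obtain ⟨N, hN⟩ := eventually_atTop.1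
    (hε.eventually (eventually_le_nhds (by nlinarith : (0 : ℝ) < (1 - γ) * (η / 2))))
  have hshift : ∀ j, x (N + j) ≤ η / 2 + γ ^ j * x N := by
    intro j
    induction j with
    | zero => simp only [add_zero, pow_zero, one_mul]; linarith
    | succ j ih =>
      calc x (N + (j + 1)) ≤ γ * x (N + j) + ε (N + j) := hrec (N + j)
        _ ≤ γ * (η / 2 + γ ^ j * x N) + (1 - γ) * (η / 2) := by
          gcongr; exact hN _ (Nat.le_add_right N j)
        _ = η / 2 + γ ^ (j + 1) * x N := by ring
  obtain ⟨M, hM⟩ := eventually_atTop.1 <|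
    ((tendsto_pow_atTop_nhds_zero_of_lt_one hγ0 hγ1).mul_const (x N)).eventually
      (by rw [zero_mul]; exact gt_mem_nhds (half_pos hη))
  filter_upwards [eventually_ge_atTop (N + M)] with k hk
  obtain ⟨j, rfl⟩ := Nat.exists_eq_add_of_le (le_trans (Nat.le_add_right N M) hk)
  linarith [hshift j, hM j (by omega)]

lemma abs_mulVec_le_norm {m n : Type*} [Fintype n] {P : Matrix m n ℝ}
    (hP0 : ∀ i j, 0 ≤ P i j) (hP1 : ∀ i, ∑ j, P i j = 1) (f : n → ℝ) (i : m) :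
    |(P *ᵥ f) i| ≤ ‖f‖ :=
  calc |(P *ᵥ f) i| = |∑ j, P i j * f j| := rfl
    _ ≤ ∑ j, P i j * ‖f‖ := by
      refine (abs_sum_le_sum_abs _ _).trans (sum_le_sum fun j _ => ?_)
      rw [abs_mul, abs_of_nonneg (hP0 i j)]
      exact mul_le_mul_of_nonneg_left (norm_le_pi_norm f j) (hP0 i j)
    _ = ‖f‖ := by rw [← sum_mul, hP1 i, one_mul]

section MunchausenValueIteration

open Real

variable {S A : Type*} [Fintype A]

noncomputable def softValue (τ : ℝ) (q : S × A → ℝ) (s : S) : ℝ :=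
  logSumExp τ fun a => q (s, a)

noncomputable def softValueErrorSum (τ : ℝ) (q : ℕ → S × A → ℝ) (v : S → ℝ)
    (k : ℕ) : S → ℝ :=
  ∑ j ∈ range k, (softValue τ (q j) - v)

variable {q : ℕ → S × A → ℝ} {v : S → ℝ} {τ : ℝ}

lemma softValueErrorSum_succ (k : ℕ) :
    softValueErrorSum τ q v (k + 1) = softValueErrorSum τ q v k + (softValue τ (q k) - v) :=
  sum_range_succ _ _

variable [Fintype S] {P : Matrix (S × A) S ℝ} {r : S × A → ℝ} {γ : ℝ} {astar : S → A}

lemma mvi_step_eq [Nonempty A] (hτ : τ ≠ 0) (α : ℝ) (q q' : S × A → ℝ)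
    (π' : S → A → ℝ)
    (hπ' : ∀ s a, π' s a = softmax τ (fun a => q (s, a)) a)
    (hq' : ∀ s a, q' (s, a) = r (s, a) + α * τ * log (π' s a)
      + γ * ∑ s', P (s, a) s' * (∑ a', π' s' a' * (q (s', a') - τ * log (π' s' a'))))
    (s : S) (a : A) :
    q' (s, a) = r (s, a) + α * (q (s, a) - softValue τ q s)
      + γ * (P *ᵥ softValue τ q) (s, a) := by
  obtain rfl : π' = fun s => softmax τ (fun a => q (s, a)) := funext fun s => funext (hπ' s)
  simp only [hq', sum_softmax_mul_sub_mul_log hτ]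
  rw [mul_assoc, mul_log_softmax hτ]
  rfl

lemma mvi_one_closed_form
    (hrec : ∀ k s a, q (k + 1) (s, a)
      = r (s, a) + (q k (s, a) - softValue τ (q k) s) + γ * (P *ᵥ softValue τ (q k)) (s, a))
    (v : S → ℝ) (k : ℕ) (s : S) (a : A) :
    q k (s, a) = q 0 (s, a) + k * (r (s, a) + γ * (P *ᵥ v) (s, a) - v s)
      + γ * (P *ᵥ softValueErrorSum τ q v k) (s, a) - softValueErrorSum τ q v k s := by
  induction k with
  | zero => simp [softValueErrorSum]
  | succ k ih =>
    rw [hrec, ih, softValueErrorSum_succ, Matrix.mulVec_add, Matrix.mulVec_sub]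
    simp only [Pi.add_apply, Pi.sub_apply]
    push_cast
    ring

lemma abs_softValueErrorSum_succ_le [Nonempty A]
    (hP0 : ∀ i j, 0 ≤ P i j) (hP1 : ∀ i, ∑ j, P i j = 1) (hγ : 0 ≤ γ) (hτ : 0 < τ)
    (hrec : ∀ k s a, q (k + 1) (s, a)
      = r (s, a) + (q k (s, a) - softValue τ (q k) s) + γ * (P *ᵥ softValue τ (q k)) (s, a))
    (hopt : ∀ s a, r (s, a) + γ * (P *ᵥ v) (s, a) ≤ v s)
    (hgreedy : ∀ s, r (s, astar s) + γ * (P *ᵥ v) (s, astar s) = v s) (k : ℕ) (s : S) :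
    |softValueErrorSum τ q v (k + 1) s|
      ≤ ‖q 0‖ + τ * log (Fintype.card A) + ‖v‖
        + γ * ‖softValueErrorSum τ q v k‖ := by
  set E := softValueErrorSum τ q v
  set W : A → ℝ := fun a => q k (s, a) + E k s
  have hW : ∀ a, W a = q 0 (s, a) + k * (r (s, a) + γ * (P *ᵥ v) (s, a) - v s)
      + γ * (P *ᵥ E k) (s, a) := fun a => by
    simp only [W]; rw [mvi_one_closed_form hrec v k s a]; ring
  have hsucc : E (k + 1) s = logSumExp τ W - v s := by
    simp only [W, E, logSumExp_add_const hτ.ne', softValueErrorSum_succ, Pi.add_apply,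
      Pi.sub_apply, softValue]
    ring
  have hq0 : ∀ a, |q 0 (s, a)| ≤ ‖q 0‖ := fun a => norm_le_pi_norm (q 0) (s, a)
  have hPE : ∀ a, |γ * (P *ᵥ E k) (s, a)| ≤ γ * ‖E k‖ := fun a => by
    rw [abs_mul, abs_of_nonneg hγ]
    exact mul_le_mul_of_nonneg_left (abs_mulVec_le_norm hP0 hP1 _ _) hγ
  have hv : |v s| ≤ ‖v‖ := norm_le_pi_norm v s
  have hupper : logSumExp τ W ≤ ‖q 0‖ + γ * ‖E k‖ + τ * log (Fintype.card A) := by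
    refine logSumExp_le_of_forall_le hτ fun a => ?_
    have hadv : (k : ℝ) * (r (s, a) + γ * (P *ᵥ v) (s, a) - v s) ≤ 0 :=
      mul_nonpos_of_nonneg_of_nonpos k.cast_nonneg (by linarith [hopt s a])
    linarith [hW a, (abs_le.1 (hq0 a)).2, (abs_le.1 (hPE a)).2]
  have hlower := le_logSumExp hτ W (astar s)
  rw [hW, hgreedy, sub_self, mul_zero, add_zero] at hlower
  have hκ : 0 ≤ τ * log (Fintype.card A) := by positivity
  rw [hsucc, abs_le]
  constructor <;>
    linarith [abs_le.1 (hq0 (astar s)), abs_le.1 (hPE (astar s)), abs_le.1 hv]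

lemma norm_softValueErrorSum_le [Nonempty A]
    (hP0 : ∀ i j, 0 ≤ P i j) (hP1 : ∀ i, ∑ j, P i j = 1) (hγ0 : 0 ≤ γ) (hγ1 : γ < 1)
    (hτ : 0 < τ)
    (hrec : ∀ k s a, q (k + 1) (s, a)
      = r (s, a) + (q k (s, a) - softValue τ (q k) s) + γ * (P *ᵥ softValue τ (q k)) (s, a))
    (hopt : ∀ s a, r (s, a) + γ * (P *ᵥ v) (s, a) ≤ v s)
    (hgreedy : ∀ s, r (s, astar s) + γ * (P *ᵥ v) (s, astar s) = v s) (k : ℕ) :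
    ‖softValueErrorSum τ q v k‖
      ≤ (‖q 0‖ + τ * log (Fintype.card A) + ‖v‖) / (1 - γ) := by
  set C := ‖q 0‖ + τ * log (Fintype.card A) + ‖v‖
  have h1γ : 0 < 1 - γ := sub_pos.2 hγ1
  have hC : 0 ≤ C / (1 - γ) := by positivity
  induction k with
  | zero => simpa [softValueErrorSum] using hC
  | succ k ih =>
    refine (pi_norm_le_iff_of_nonneg hC).2 fun s => ?_
    calc ‖softValueErrorSum τ q v (k + 1) s‖ ≤ C + γ * ‖softValueErrorSum τ q v k‖ :=
          abs_softValueErrorSum_succ_le hP0 hP1 hγ0 hτ hrec hopt hgreedy k s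
      _ ≤ C + γ * (C / (1 - γ)) := by gcongr
      _ = C / (1 - γ) := by field_simp; ring

lemma tendsto_mvi_one_sub_atBot [Nonempty A]
    (hP0 : ∀ i j, 0 ≤ P i j) (hP1 : ∀ i, ∑ j, P i j = 1) (hγ0 : 0 ≤ γ) (hγ1 : γ < 1)
    (hτ : 0 < τ)
    (hrec : ∀ k s a, q (k + 1) (s, a)
      = r (s, a) + (q k (s, a) - softValue τ (q k) s) + γ * (P *ᵥ softValue τ (q k)) (s, a))
    (hopt : ∀ s a, r (s, a) + γ * (P *ᵥ v) (s, a) ≤ v s)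
    (hgreedy : ∀ s, r (s, astar s) + γ * (P *ᵥ v) (s, astar s) = v s) {s : S} {a : A}
    (hgap : r (s, a) + γ * (P *ᵥ v) (s, a) < v s) :
    Tendsto (fun k => q k (s, a) - q k (s, astar s)) atTop atBot := by
  set β := (‖q 0‖ + τ * log (Fintype.card A) + ‖v‖) / (1 - γ)
  have hbound : ∀ k a, |γ * (P *ᵥ softValueErrorSum τ q v k) (s, a)| ≤ γ * β := by
    intro k a
    rw [abs_mul, abs_of_nonneg hγ0]
    exact mul_le_mul_of_nonneg_left ((abs_mulVec_le_norm hP0 hP1 _ _).trans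
      (norm_softValueErrorSum_le hP0 hP1 hγ0 hγ1 hτ hrec hopt hgreedy k)) hγ0
  have hsub : ∀ k : ℕ, q k (s, a) - q k (s, astar s)
      ≤ 2 * (‖q 0‖ + γ * β) + k * (r (s, a) + γ * (P *ᵥ v) (s, a) - v s) := fun k => by
    rw [mvi_one_closed_form hrec v k s a, mvi_one_closed_form hrec v k s (astar s), hgreedy,
      sub_self, mul_zero, add_zero]
    linarith [abs_le.1 (norm_le_pi_norm (q 0) (s, a)),
      abs_le.1 (norm_le_pi_norm (q 0) (s, astar s)), abs_le.1 (hbound k a),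
      abs_le.1 (hbound k (astar s))]
  refine tendsto_atBot_mono hsub (tendsto_atBot_add_const_left _ _ ?_)
  exact tendsto_natCast_atTop_atTop.atTop_mul_const_of_neg (by linarith)

lemma tendsto_softValue_sub_optimal [Nonempty A]
    (hP0 : ∀ i j, 0 ≤ P i j) (hP1 : ∀ i, ∑ j, P i j = 1) (hγ0 : 0 ≤ γ) (hγ1 : γ < 1)
    (hτ : 0 < τ)
    (hrec : ∀ k s a, q (k + 1) (s, a)
      = r (s, a) + (q k (s, a) - softValue τ (q k) s) + γ * (P *ᵥ softValue τ (q k)) (s, a))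
    (hopt : ∀ s a, r (s, a) + γ * (P *ᵥ v) (s, a) ≤ v s)
    (hgreedy : ∀ s, r (s, astar s) + γ * (P *ᵥ v) (s, astar s) = v s)
    (hgap : ∀ s a, a ≠ astar s → r (s, a) + γ * (P *ᵥ v) (s, a) < v s) (s : S) :
    Tendsto (fun k => softValue τ (q k) s - q k (s, astar s)) atTop (𝓝 0) := by
  classical
  have hexp : Tendsto (fun k => τ * ∑ a ∈ univ.erase (astar s),
      exp ((q k (s, a) - q k (s, astar s)) / τ)) atTop
      (𝓝 (τ * ∑ _a ∈ univ.erase (astar s), 0)) :=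
    (tendsto_finsetSum _ fun a ha => tendsto_exp_atBot.comp
      ((tendsto_mvi_one_sub_atBot hP0 hP1 hγ0 hγ1 hτ hrec hopt hgreedy
        (hgap s a (ne_of_mem_erase ha))).atBot_div_const hτ)).const_mul τ
  rw [sum_const_zero, mul_zero] at hexp
  exact squeeze_zero (fun k => sub_nonneg.2 (le_logSumExp hτ (fun a => q k (s, a)) (astar s)))
    (fun k => logSumExp_sub_le hτ (fun a => q k (s, a)) (astar s)) hexp

lemma tendsto_mvi_one_optimal [Nonempty A]
    (hP0 : ∀ i j, 0 ≤ P i j) (hP1 : ∀ i, ∑ j, P i j = 1) (hγ0 : 0 ≤ γ) (hγ1 : γ < 1)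
    (hτ : 0 < τ)
    (hrec : ∀ k s a, q (k + 1) (s, a)
      = r (s, a) + (q k (s, a) - softValue τ (q k) s) + γ * (P *ᵥ softValue τ (q k)) (s, a))
    (hopt : ∀ s a, r (s, a) + γ * (P *ᵥ v) (s, a) ≤ v s)
    (hgreedy : ∀ s, r (s, astar s) + γ * (P *ᵥ v) (s, astar s) = v s)
    (hgap : ∀ s a, a ≠ astar s → r (s, a) + γ * (P *ᵥ v) (s, a) < v s) :
    Tendsto (fun k s => q k (s, astar s)) atTop (𝓝 v) := by
  set u : ℕ → S → ℝ := fun k s => q k (s, astar s)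
  set δ : ℕ → S → ℝ := fun k => softValue τ (q k) - u k
  have hδ : Tendsto δ atTop (𝓝 0) := tendsto_pi_nhds.2 fun s =>
    tendsto_softValue_sub_optimal hP0 hP1 hγ0 hγ1 hτ hrec hopt hgreedy hgap s
  have hδnorm : Tendsto (fun k => (1 + γ) * ‖δ k‖) atTop (𝓝 0) := by
    simpa using hδ.norm.const_mul (1 + γ)
  have hstep : ∀ k s, ‖u (k + 1) s - v s‖ ≤ γ * ‖u k - v‖ + (1 + γ) * ‖δ k‖ := by
    intro k s
    have hsplit : softValue τ (q k) - v = (u k - v) + δ k := by simp only [δ]; abel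
    have hu : u (k + 1) s - v s = γ * (P *ᵥ ((u k - v) + δ k)) (s, astar s) - δ k s := by
      rw [← hsplit, mulVec_sub]
      simp only [u, δ, hrec, Pi.sub_apply]
      linarith [hgreedy s]
    have hP := abs_mulVec_le_norm hP0 hP1 ((u k - v) + δ k) (s, astar s)
    rw [Real.norm_eq_abs, hu]
    calc |γ * (P *ᵥ ((u k - v) + δ k)) (s, astar s) - δ k s|
        ≤ γ * ‖(u k - v) + δ k‖ + ‖δ k‖ := by
          refine (abs_sub _ _).trans (add_le_add ?_ (norm_le_pi_norm (δ k) s))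
          rw [abs_mul, abs_of_nonneg hγ0]
          exact mul_le_mul_of_nonneg_left hP hγ0
      _ ≤ γ * (‖u k - v‖ + ‖δ k‖) + ‖δ k‖ := by gcongr; exact norm_add_le _ _
      _ = γ * ‖u k - v‖ + (1 + γ) * ‖δ k‖ := by ring
  refine tendsto_iff_norm_sub_tendsto_zero.2 <|
    tendsto_zero_of_le_mul_add hγ0 hγ1 (fun k => norm_nonneg _) (fun k => ?_) hδnorm
  exact (pi_norm_le_iff_of_nonneg (by positivity)).2 (hstep k)

end MunchausenValueIteration

theorem stmt_14_general {S A : Type*} [Fintype S] [Fintype A] [Nonempty A]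
    (r : S × A → ℝ) (γ : ℝ) (hγ : γ ∈ Set.Ioo (0 : ℝ) 1)
    (P : S × A → S → ℝ) (hP0 : ∀ sa s', 0 ≤ P sa s') (hP1 : ∀ sa, ∑ s', P sa s' = 1)
    (τ : ℝ) (hτ : 0 < τ)
    (qstar : S × A → ℝ)
    (hqstar : ∀ s a, qstar (s, a)
      = r (s, a) + γ * ∑ s', P (s, a) s' *
          (Finset.univ.sup' Finset.univ_nonempty fun a' => qstar (s', a')))
    (astar : S → A)
    (hastar : ∀ s a, a ≠ astar s → qstar (s, a) < qstar (s, astar s))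
    (π : ℕ → S → A → ℝ) (q : ℕ → S × A → ℝ)
    (hπ : ∀ k s a, π (k + 1) s a
      = Real.exp (q k (s, a) / τ) / ∑ a', Real.exp (q k (s, a') / τ))
    (hq : ∀ k s a, q (k + 1) (s, a)
      = r (s, a) + 1 * τ * Real.log (π (k + 1) s a)
        + γ * ∑ s', P (s, a) s' *
            (∑ a', π (k + 1) s' a' * (q k (s', a') - τ * Real.log (π (k + 1) s' a')))) :
    ∀ s : S,
      Filter.Tendsto (fun k => q k (s, astar s)) Filter.atTop (nhds (qstar (s, astar s))) ∧
      ∀ a : A, a ≠ astar s →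
        Filter.Tendsto (fun k => q k (s, a)) Filter.atTop Filter.atBot := by
  obtain ⟨hγ0, hγ1⟩ := hγ
  set v : S → ℝ := fun s => qstar (s, astar s)
  have hqstar_le : ∀ s a, qstar (s, a) ≤ v s := fun s a => by
    rcases eq_or_ne a (astar s) with rfl | ha
    exacts [le_rfl, (hastar s a ha).le]
  have hsup : ∀ s, univ.sup' univ_nonempty (fun a => qstar (s, a)) = v s := fun s =>
    le_antisymm (sup'_le _ _ fun a _ => hqstar_le s a)
      (le_sup' (fun a => qstar (s, a)) (mem_univ (astar s)))
  have hbellman : ∀ s a, qstar (s, a) = r (s, a) + γ * (P *ᵥ v) (s, a) := fun s a => by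
    rw [hqstar]
    simp only [hsup]
    rfl
  have hrec : ∀ k s a, q (k + 1) (s, a)
      = r (s, a) + (q k (s, a) - softValue τ (q k) s) + γ * (P *ᵥ softValue τ (q k)) (s, a) :=
    fun k s a => by
      simpa only [one_mul] using
        mvi_step_eq hτ.ne' 1 (q k) (q (k + 1)) (π (k + 1)) (hπ k) (hq k) s a
  have hopt : ∀ s a, r (s, a) + γ * (P *ᵥ v) (s, a) ≤ v s := fun s a =>
    hbellman s a ▸ hqstar_le s a
  have hgreedy : ∀ s, r (s, astar s) + γ * (P *ᵥ v) (s, astar s) = v s := fun s =>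
    (hbellman s (astar s)).symm
  have hgap : ∀ s a, a ≠ astar s → r (s, a) + γ * (P *ᵥ v) (s, a) < v s := fun s a ha =>
    hbellman s a ▸ hastar s a ha
  have hoptimal := tendsto_pi_nhds.1 <|
    tendsto_mvi_one_optimal hP0 hP1 hγ0.le hγ1 hτ hrec hopt hgreedy hgap
  refine fun s => ⟨hoptimal s, fun a ha => ?_⟩
  simpa using (tendsto_mvi_one_sub_atBot hP0 hP1 hγ0.le hγ1 hτ hrec hopt hgreedy
    (hgap s a ha)).atBot_add (hoptimal s)

/-- Theorem 2 (case α = 1): along the error-free M-VI(1,τ) iterates, with `q_*` the (unique)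
fixed point of the Bellman optimality operator and `a_*(s)` the unique maximizer of
`q_*(s,·)`, one has `q_k(s, a_*(s)) → q_*(s, a_*(s))` and `q_k(s,a) → −∞` for `a ≠ a_*(s)`. -/
theorem stmt_14 {S A : Type*} [Fintype S] [Fintype A] [Nonempty S] [Nonempty A]
    (r : S × A → ℝ) (γ : ℝ) (hγ : γ ∈ Set.Ioo (0 : ℝ) 1)
    (P : S × A → S → ℝ) (hP0 : ∀ sa s', 0 ≤ P sa s') (hP1 : ∀ sa, ∑ s', P sa s' = 1)
    (τ : ℝ) (hτ : 0 < τ)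
    (qstar : S × A → ℝ)
    (hqstar : ∀ s a, qstar (s, a)
      = r (s, a) + γ * ∑ s', P (s, a) s' *
          (Finset.univ.sup' Finset.univ_nonempty fun a' => qstar (s', a')))
    (astar : S → A)
    (hastar : ∀ s a, a ≠ astar s → qstar (s, a) < qstar (s, astar s))
    (π : ℕ → S → A → ℝ) (q : ℕ → S × A → ℝ)
    (hπ00 : ∀ s a, 0 < π 0 s a) (hπ01 : ∀ s, ∑ a, π 0 s a = 1)
    (hπ : ∀ k s a, π (k + 1) s a
      = Real.exp (q k (s, a) / τ) / ∑ a', Real.exp (q k (s, a') / τ))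
    (hq : ∀ k s a, q (k + 1) (s, a)
      = r (s, a) + 1 * τ * Real.log (π (k + 1) s a)
        + γ * ∑ s', P (s, a) s' *
            (∑ a', π (k + 1) s' a' * (q k (s', a') - τ * Real.log (π (k + 1) s' a')))) :
    ∀ s : S,
      Filter.Tendsto (fun k => q k (s, astar s)) Filter.atTop (nhds (qstar (s, astar s))) ∧
      ∀ a : A, a ≠ astar s →
        Filter.Tendsto (fun k => q k (s, a)) Filter.atTop Filter.atBot :=
  stmt_14_general r γ hγ P hP0 hP1 τ hτ qstar hqstar astar hastar π q hπ hq
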